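/- Let W and Y be real symmetric n×n matrices with W positive definite. Then the block matrix S = [[W^{1/2}, 0],[W^{−1/2} Y, W^{−1/2}]] is symplectic, and the matrix G = [[W + Y W⁻¹ Y, Y W⁻¹],[W⁻¹ Y, W⁻¹]] satisfies G = SᵀS; consequently G is a symmetric, positive definite, symplectic 2n×2n matrix. -/

import Mathlib

open Matrix

/-- The positive semidefinite square root of a positive semidefinite matrix
(the definition `Matrix.PosSemidef.sqrt` of the older Mathlib, removed since). -/
noncomputable def Matrix.PosSemidef.sqrt {n 𝕜 : Type*} [Fintype n] [DecidableEq n] [RCLike 𝕜]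
    [PartialOrder 𝕜] {A : Matrix n n 𝕜} (hA : A.PosSemidef) : Matrix n n 𝕜 :=
  (hA.1.eigenvectorUnitary : Matrix n n 𝕜) *
    diagonal (fun i => ((√(hA.1.eigenvalues i) : ℝ) : 𝕜)) *
    (star hA.1.eigenvectorUnitary : Matrix n n 𝕜)

/-- The standard symplectic matrix `J = [[0, Iₙ],[−Iₙ, 0]]`. -/
def Jmat (n : ℕ) : Matrix (Fin n ⊕ Fin n) (Fin n ⊕ Fin n) ℝ :=
  Matrix.fromBlocks 0 1 (-1) 0

/-- The block matrix `S = [[W^{1/2}, 0],[W^{−1/2} Y, W^{−1/2}]]` associated with real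
symmetric matrices `W` (positive definite) and `Y`, where `W^{1/2}` is the positive
definite square root of `W`. -/
noncomputable def SWY {n : ℕ} (W Y : Matrix (Fin n) (Fin n) ℝ) (hW : W.PosDef) :
    Matrix (Fin n ⊕ Fin n) (Fin n ⊕ Fin n) ℝ :=
  Matrix.fromBlocks hW.posSemidef.sqrt 0 ((hW.posSemidef.sqrt)⁻¹ * Y) (hW.posSemidef.sqrt)⁻¹

/-!
With `R = W^{1/2}` symmetric and invertible, `S = [[R, 0], [R⁻¹Y, R⁻¹]]` passes the block
criterion for symplecticity because `Rᵀ R⁻¹ = 1` and `Rᵀ (R⁻¹ Y) = Y` is symmetric. Block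
multiplication gives `SᵀS = G` since `R⁻¹R⁻¹ = (RR)⁻¹ = W⁻¹`. Being a Gram matrix `SᵀS` of an
invertible matrix, `G` is symmetric and positive definite, and it is symplectic as a product
of the symplectic matrices `Sᵀ` and `S`.
-/

namespace Matrix

namespace PosSemidef

variable {m : Type*} [Fintype m] [DecidableEq m] {A : Matrix m m ℝ}

lemma sqrt_mul_self (hA : A.PosSemidef) : hA.sqrt * hA.sqrt = A := by
  set U : Matrix m m ℝ := (hA.1.eigenvectorUnitary : Matrix m m ℝ)
  have hU : star U * U = 1 := Unitary.coe_star_mul_self _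
  conv_rhs => rw [hA.1.spectral_theorem, Unitary.conjStarAlgAut_apply]
  calc hA.sqrt * hA.sqrt
      = U * (diagonal (fun i => √(hA.1.eigenvalues i)) * (star U * U) *
          diagonal (fun i => √(hA.1.eigenvalues i))) * star U := by
        simp only [sqrt, RCLike.ofReal_real_eq_id, id, U, Matrix.mul_assoc]
    _ = U * diagonal (RCLike.ofReal ∘ hA.1.eigenvalues) * star U := by
        rw [hU, Matrix.mul_one, diagonal_mul_diagonal]
        congr 2
        exact congrArg diagonal <| funext fun i => by
          simp [Real.mul_self_sqrt (hA.eigenvalues_nonneg i)]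

lemma transpose_sqrt (hA : A.PosSemidef) : hA.sqrtᵀ = hA.sqrt := by
  have hsqrt : hA.sqrt.PosSemidef := by
    rw [sqrt,
      (Unitary.isUnit_coe (U := hA.1.eigenvectorUnitary)).posSemidef_star_right_conjugate_iff]
    exact PosSemidef.diagonal fun i => by simp [Real.sqrt_nonneg]
  simpa [IsHermitian] using hsqrt.1

end PosSemidef

lemma PosDef.transpose_mul_self {m : Type*} [Fintype m] [DecidableEq m] (A : Matrix m m ℝ)
    (hA : IsUnit A.det) : (Aᵀ * A).PosDef := by
  simpa using PosDef.conjTranspose_mul_self A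
    (mulVec_injective_iff_isUnit.mpr ((isUnit_iff_isUnit_det A).mpr hA))

section fromBlocks

variable {l R : Type*} [Fintype l] [DecidableEq l] [CommRing R] {A Y : Matrix l l R}

lemma fromBlocks_inv_mul_mem_symplecticGroup (hA : A.IsSymm) (hAdet : IsUnit A.det)
    (hY : Y.IsSymm) : fromBlocks A 0 (A⁻¹ * Y) A⁻¹ ∈ symplecticGroup l R := by
  have hAT : Aᵀ = A := hA
  rw [SymplecticGroup.fromBlocks_mem_iff, transpose_mul, transpose_nonsing_inv, hAT, hY.eq,
    mul_nonsing_inv _ hAdet, ← Matrix.mul_assoc, mul_nonsing_inv _ hAdet,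
    Matrix.mul_assoc, nonsing_inv_mul _ hAdet]
  simp

lemma fromBlocks_inv_mul_transpose_mul_self (hA : A.IsSymm) (hY : Y.IsSymm) :
    (fromBlocks A 0 (A⁻¹ * Y) A⁻¹)ᵀ * fromBlocks A 0 (A⁻¹ * Y) A⁻¹ =
      fromBlocks (A * A + Y * (A * A)⁻¹ * Y) (Y * (A * A)⁻¹) ((A * A)⁻¹ * Y) (A * A)⁻¹ := by
  have hAT : Aᵀ = A := hA
  rw [fromBlocks_transpose, fromBlocks_multiply, transpose_mul, transpose_nonsing_inv, hAT,
    hY.eq, Matrix.mul_inv_rev]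
  simp [Matrix.mul_assoc]

end fromBlocks

end Matrix

lemma Jmat_eq_neg_J (n : ℕ) : Jmat n = -J (Fin n) ℝ := by
  simp [Jmat, J, fromBlocks_neg]

lemma mem_symplecticGroup_iff_transpose_mul_Jmat_mul {n : ℕ}
    {A : Matrix (Fin n ⊕ Fin n) (Fin n ⊕ Fin n) ℝ} :
    A ∈ symplecticGroup (Fin n) ℝ ↔ Aᵀ * Jmat n * A = Jmat n := by
  rw [SymplecticGroup.mem_iff', Jmat_eq_neg_J, Matrix.mul_neg, Matrix.neg_mul, neg_inj]

/-- `S = [[W^{1/2}, 0],[W^{−1/2}Y, W^{−1/2}]]` is symplectic and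
`G = [[W + Y W⁻¹ Y, Y W⁻¹],[W⁻¹ Y, W⁻¹]]` satisfies `G = SᵀS`; consequently `G` is
symmetric, positive definite and symplectic. -/
theorem statement14 (n : ℕ) (W Y : Matrix (Fin n) (Fin n) ℝ)
    (hW : W.PosDef) (hY : Y.IsSymm) :
    (SWY W Y hW)ᵀ * Jmat n * SWY W Y hW = Jmat n ∧
    Matrix.fromBlocks (W + Y * W⁻¹ * Y) (Y * W⁻¹) (W⁻¹ * Y) W⁻¹ = (SWY W Y hW)ᵀ * SWY W Y hW ∧
    (Matrix.fromBlocks (W + Y * W⁻¹ * Y) (Y * W⁻¹) (W⁻¹ * Y) W⁻¹).IsSymm ∧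
    (Matrix.fromBlocks (W + Y * W⁻¹ * Y) (Y * W⁻¹) (W⁻¹ * Y) W⁻¹).PosDef ∧
    (Matrix.fromBlocks (W + Y * W⁻¹ * Y) (Y * W⁻¹) (W⁻¹ * Y) W⁻¹)ᵀ * Jmat n *
        Matrix.fromBlocks (W + Y * W⁻¹ * Y) (Y * W⁻¹) (W⁻¹ * Y) W⁻¹ = Jmat n := by
  set R := hW.posSemidef.sqrt
  have hRR : R * R = W := hW.posSemidef.sqrt_mul_self
  have hR : R.IsSymm := hW.posSemidef.transpose_sqrt
  have hRdet : IsUnit R.det :=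
    isUnit_of_mul_isUnit_left (by rw [← det_mul, hRR]; exact hW.det_pos.ne'.isUnit)
  have hS : SWY W Y hW ∈ symplecticGroup (Fin n) ℝ :=
    fromBlocks_inv_mul_mem_symplecticGroup hR hRdet hY
  have hG : Matrix.fromBlocks (W + Y * W⁻¹ * Y) (Y * W⁻¹) (W⁻¹ * Y) W⁻¹ =
      (SWY W Y hW)ᵀ * SWY W Y hW := by
    rw [SWY, fromBlocks_inv_mul_transpose_mul_self hR hY, hRR]
  refine ⟨mem_symplecticGroup_iff_transpose_mul_Jmat_mul.mp hS, hG, ?_, ?_, ?_⟩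
  · rw [hG]; exact isSymm_transpose_mul_self _
  · rw [hG]; exact PosDef.transpose_mul_self _ (SymplecticGroup.symplectic_det hS)
  · rw [hG, ← mem_symplecticGroup_iff_transpose_mul_Jmat_mul]
    exact mul_mem (SymplecticGroup.transpose_mem hS) hS
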